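/- arXiv:1711.07237 — 4 statements merged into one kernel-verified Lean document; each statement's English description precedes it below -/
import Mathlib

section
/- Assume (N−2)_+/N < m < q < 1 and that the initial datum satisfies u₀ ≢ 0 and u₀(x) ≤ κ₀|x|^{−2/(q−m)} for all x ∈ ℝ^N, for some κ₀ > 0. Then there exists a constant c_∞ > 0 (depending on N, m, q, u₀) such that sup_{x ∈ ℝ^N} u(t,x) ≥ c_∞ (T_e − t)^{1/(1−q)} for all t ∈ (0, T_e). -/
open MeasureTheory Real Set

/-- The Laplacian of `f : ℝ^N → ℝ` at `x`, as the sum of second partial derivatives. -/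
noncomputable def lapl {N : ℕ} (f : EuclideanSpace ℝ (Fin N) → ℝ)
    (x : EuclideanSpace ℝ (Fin N)) : ℝ :=
  ∑ i : Fin N, fderiv ℝ (fun y => fderiv ℝ f y (EuclideanSpace.single i 1)) x
      (EuclideanSpace.single i 1)

/-! The spatially homogeneous solution `w(t) = ((1 - q) (T - t)) ^ (1 / (1 - q))` of
`w' = -w ^ q`, which vanishes at `t = T`, is a supersolution of the equation. If `sup u(t)` were
smaller than `w(t)` for `T = T_e`, it would also be smaller for some `T < T_e`, and comparison
would force `u(T) ≡ 0`, contradicting the definition of `T_e`; this gives the bound with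
`c_∞ = (1 - q) ^ (1 / (1 - q))`.

The comparison is run against `w + σ e^{K (t - t₀)} (1 + |x|²)`: since `u` is bounded, a first
contact point exists, and there the tangent paraboloid of the concave map `r ↦ r ^ m` bounds the
Laplacian of `u ^ m`, so the time derivatives of `u` and of the barrier contradict the equation.
Letting `σ → 0` gives `u ≤ w`. -/

open Filter Topology

theorem HasDerivAt.nonneg_of_isMaxOn_Icc {φ : ℝ → ℝ} {a b d : ℝ} (hd : HasDerivAt φ d b)
    (hab : a < b) (hmax : IsMaxOn φ (Icc a b) b) : 0 ≤ d := by
  have hcone : a - b ∈ posTangentConeAt (Icc a b) b :=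
    sub_mem_posTangentConeAt_of_segment_subset (by rw [segment_symm, segment_eq_Icc hab.le])
  have h := hmax.localize.hasFDerivWithinAt_nonpos hd.hasFDerivAt.hasFDerivWithinAt hcone
  simp only [ContinuousLinearMap.toSpanSingleton_apply, smul_eq_mul] at h
  nlinarith

theorem IsLocalMin.nonneg_of_hasDerivAt_deriv {γ : ℝ → ℝ} {a d : ℝ} (hmin : IsLocalMin γ a)
    (hγ : Differentiable ℝ γ) (hd : HasDerivAt (deriv γ) d a) : 0 ≤ d := by
  by_contra! hneg
  have hslope : Tendsto (slope (deriv γ) a) (𝓝[>] a) (𝓝 d) :=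
    (hasDerivAt_iff_tendsto_slope.mp hd).mono_left (nhdsWithin_mono _ fun r hr => ne_of_gt hr)
  have hderiv_neg : ∀ᶠ r in 𝓝[>] a, deriv γ r < 0 := by
    filter_upwards [hslope.eventually (eventually_lt_nhds hneg), self_mem_nhdsWithin]
      with r hr (har : a < r)
    rw [slope_def_field, hmin.deriv_eq_zero, sub_zero] at hr
    exact ((div_neg_iff.mp hr).resolve_left fun h => by linarith [h.2]).1
  obtain ⟨b, hab, hb⟩ := mem_nhdsGT_iff_exists_Ioo_subset.mp hderiv_neg
  obtain ⟨r, hγr, hr⟩ :=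
    ((hmin.filter_mono nhdsWithin_le_nhds).and (Ioo_mem_nhdsGT hab)).exists
  obtain ⟨c, hc, hγc⟩ := exists_deriv_eq_slope γ hr.1 hγ.continuous.continuousOn
    hγ.differentiableOn
  have : 0 ≤ deriv γ c := hγc ▸ div_nonneg (sub_nonneg.mpr hγr) (sub_nonneg.mpr hr.1.le)
  exact (hb ⟨hc.1, hc.2.trans hr.2⟩ : deriv γ c < 0).not_ge this

theorem ContDiff.differentiable_fderiv_apply {E : Type*} [NormedAddCommGroup E]
    [NormedSpace ℝ E] {ψ : E → ℝ} (hψ : ContDiff ℝ 2 ψ) (v : E) :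
    Differentiable ℝ fun y => fderiv ℝ ψ y v :=
  ((ContinuousLinearMap.apply ℝ ℝ v).contDiff.comp (hψ.fderiv_right le_rfl)).differentiable
    one_ne_zero

theorem IsLocalMin.fderiv_fderiv_apply_nonneg {E : Type*} [NormedAddCommGroup E]
    [NormedSpace ℝ E] {ψ : E → ℝ} {x : E} (hmin : IsLocalMin ψ x) (hψ : ContDiff ℝ 2 ψ)
    (v : E) : 0 ≤ fderiv ℝ (fun y => fderiv ℝ ψ y v) x v := by
  have hψ' : Differentiable ℝ ψ := hψ.differentiable (by norm_num)
  have hline : ∀ r : ℝ, HasDerivAt (fun r : ℝ => x + r • v) v r := fun r => by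
    simpa using ((hasDerivAt_id r).smul_const v).const_add x
  have hγ : ∀ r : ℝ, HasDerivAt (fun r : ℝ => ψ (x + r • v)) (fderiv ℝ ψ (x + r • v) v) r :=
    fun r => (hψ' _).hasFDerivAt.comp_hasDerivAt r (hline r)
  have hderiv : deriv (fun r : ℝ => ψ (x + r • v)) = fun r => fderiv ℝ ψ (x + r • v) v :=
    funext fun r => (hγ r).deriv
  refine IsLocalMin.nonneg_of_hasDerivAt_deriv (a := 0) ?_ (fun r => (hγ r).differentiableAt) ?_
  · exact IsLocalMin.comp_continuous (g := fun r : ℝ => x + r • v) (by simpa using hmin)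
      (by fun_prop)
  · rw [hderiv]
    exact (hψ.differentiable_fderiv_apply v x).hasFDerivAt.comp_hasDerivAt_of_eq (0 : ℝ) (hline 0)
      (by simp)

theorem Real.rpow_le_rpow_add_mul_sub {x y p : ℝ} (hx : 0 ≤ x) (hy : 0 < y) (hp0 : 0 ≤ p)
    (hp1 : p ≤ 1) : x ^ p ≤ y ^ p + p * y ^ (p - 1) * (x - y) := by
  have hbern := rpow_one_add_le_one_add_mul_self (s := x / y - 1)
    (by linarith [div_nonneg hx hy.le]) hp0 hp1
  rw [add_sub_cancel, div_rpow hx hy.le, div_le_iff₀ (rpow_pos_of_pos hy p)] at hbern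
  rw [rpow_sub_one hy.ne']
  calc x ^ p ≤ (1 + p * (x / y - 1)) * y ^ p := hbern
    _ = y ^ p + p * (y ^ p / y) * (x - y) := by field_simp

section Laplacian

variable {N : ℕ}

theorem lapl_le_lapl_of_le_of_eq {f g : EuclideanSpace ℝ (Fin N) → ℝ}
    {x : EuclideanSpace ℝ (Fin N)} (hf : ContDiff ℝ 2 f) (hg : ContDiff ℝ 2 g)
    (hle : ∀ y, f y ≤ g y) (heq : f x = g x) :
    lapl f x ≤ lapl g x := by
  have hmin : IsLocalMin (g - f) x :=
    Eventually.of_forall fun y => by simpa [heq] using hle y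
  rw [lapl, lapl, ← sub_nonneg, ← Finset.sum_sub_distrib]
  refine Finset.sum_nonneg fun i _ => ?_
  set v := EuclideanSpace.single i (1 : ℝ)
  have hsub : (fun y => fderiv ℝ (g - f) y v) = fun y => fderiv ℝ g y v - fderiv ℝ f y v := by
    funext y
    rw [fderiv_sub (hg.differentiable (by norm_num) y) (hf.differentiable (by norm_num) y)]
    rfl
  have key := hmin.fderiv_fderiv_apply_nonneg (hg.sub hf) v
  rwa [hsub, fderiv_fun_sub (hg.differentiable_fderiv_apply v x)
    (hf.differentiable_fderiv_apply v x), sub_apply, sub_nonneg, ← sub_nonneg] at key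

theorem lapl_const_add_mul_norm_sq (a k : ℝ) (x : EuclideanSpace ℝ (Fin N)) :
    lapl (fun y : EuclideanSpace ℝ (Fin N) => a + k * ‖y‖ ^ 2) x = 2 * N * k := by
  have hfirst : ∀ (i : Fin N) (y : EuclideanSpace ℝ (Fin N)),
      fderiv ℝ (fun y : EuclideanSpace ℝ (Fin N) => a + k * ‖y‖ ^ 2) y
        (EuclideanSpace.single i 1) = 2 * k * y i := fun i y => by
    rw [(((hasStrictFDerivAt_norm_sq y).hasFDerivAt.const_mul k).const_add a).fderiv]
    simp only [smul_apply, coe_innerSL_apply,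
      EuclideanSpace.inner_single_right, ringHom_apply, one_mul, nsmul_eq_mul, Nat.cast_ofNat,
      smul_eq_mul]
    ring
  have hsecond : ∀ i : Fin N, fderiv ℝ (fun y : EuclideanSpace ℝ (Fin N) => 2 * k * y i) x
      (EuclideanSpace.single i 1) = 2 * k := fun i => by
    have hproj : HasFDerivAt (fun y : EuclideanSpace ℝ (Fin N) => y i)
        (EuclideanSpace.proj (𝕜 := ℝ) i) x := (EuclideanSpace.proj (𝕜 := ℝ) i).hasFDerivAt
    rw [(hproj.const_mul (2 * k)).fderiv]
    simp
  simp only [lapl, hfirst, hsecond, Finset.sum_const, Finset.card_univ, Fintype.card_fin,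
    nsmul_eq_mul]
  ring

theorem lapl_rpow_le_of_le_quadratic {f : EuclideanSpace ℝ (Fin N) → ℝ} {p a c : ℝ}
    {x : EuclideanSpace ℝ (Fin N)} (hf0 : ∀ y, 0 ≤ f y) (hfx : 0 < f x)
    (hfp : ContDiff ℝ 2 fun y => f y ^ p) (hp0 : 0 ≤ p) (hp1 : p ≤ 1)
    (hle : ∀ y, f y ≤ a + c * ‖y‖ ^ 2) (heq : f x = a + c * ‖x‖ ^ 2) :
    lapl (fun y => f y ^ p) x ≤ 2 * N * (p * f x ^ (p - 1) * c) := by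
  set k := p * f x ^ (p - 1)
  have hk0 : 0 ≤ k := mul_nonneg hp0 (rpow_nonneg hfx.le _)
  have htangent : ∀ y, f y ^ p ≤ (f x ^ p - k * c * ‖x‖ ^ 2) + k * c * ‖y‖ ^ 2 := fun y =>
    calc f y ^ p ≤ f x ^ p + k * (f y - f x) := rpow_le_rpow_add_mul_sub (hf0 y) hfx hp0 hp1
      _ ≤ f x ^ p + k * (c * ‖y‖ ^ 2 - c * ‖x‖ ^ 2) := by
        gcongr f x ^ p + k * ?_
        linarith [hle y]
      _ = _ := by ring
  rw [← lapl_const_add_mul_norm_sq (f x ^ p - k * c * ‖x‖ ^ 2) (k * c) x]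
  exact lapl_le_lapl_of_le_of_eq hfp
    (contDiff_const.add (contDiff_const.mul (contDiff_norm_sq ℝ))) htangent (by ring)

end Laplacian

theorem exists_first_contact {E : Type*} [NormedAddCommGroup E] [ProperSpace E]
    {θ : ℝ × E → ℝ} {t₀ T R : ℝ} (hθ : ContinuousOn θ (Icc t₀ T ×ˢ univ))
    (hR : ∀ s ∈ Icc t₀ T, ∀ x, 0 ≤ θ (s, x) → ‖x‖ ≤ R) (hinit : ∀ x, θ (t₀, x) < 0)
    {s₁ : ℝ} (hs₁ : s₁ ∈ Icc t₀ T) {x₁ : E} (hx₁ : 0 ≤ θ (s₁, x₁)) :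
    ∃ s ∈ Ioc t₀ T, ∃ x, θ (s, x) = 0 ∧ (∀ y, θ (s, y) ≤ 0) ∧ ∀ r ∈ Icc t₀ s, θ (r, x) ≤ 0 := by
  set F := (Icc t₀ T ×ˢ Metric.closedBall 0 R) ∩ θ ⁻¹' Ici 0
  have hmemF : ∀ s ∈ Icc t₀ T, ∀ x, 0 ≤ θ (s, x) → (s, x) ∈ F := fun s hs x hx =>
    ⟨⟨hs, mem_closedBall_zero_iff.mpr (hR s hs x hx)⟩, hx⟩
  have hcompact : IsCompact (Icc t₀ T ×ˢ Metric.closedBall (0 : E) R) :=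
    isCompact_Icc.prod (isCompact_closedBall 0 R)
  have hF : IsCompact F := hcompact.of_isClosed_subset
    ((hθ.mono (prod_mono subset_rfl (subset_univ _))).preimage_isClosed_of_isClosed
      hcompact.isClosed isClosed_Ici) inter_subset_left
  obtain ⟨⟨s, x⟩, ⟨⟨⟨hts, hsT⟩, -⟩, hθsx⟩, hmin⟩ :=
    hF.exists_isMinOn ⟨_, hmemF s₁ hs₁ x₁ hx₁⟩ continuous_fst.continuousOn
  have hbefore : ∀ r ∈ Ico t₀ s, ∀ y, θ (r, y) < 0 := fun r hr y => by
    by_contra! hry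
    exact hr.2.not_ge (hmin (hmemF r ⟨hr.1, hr.2.le.trans hsT⟩ y hry))
  have hts' : t₀ < s := hts.lt_of_ne fun h => (hinit x).not_ge (h ▸ hθsx)
  have hnonpos : ∀ y, θ (s, y) ≤ 0 := fun y => by
    have := right_nhdsWithin_Ico_neBot hts'
    have hcont : ContinuousWithinAt (fun r => θ (r, y)) (Ico t₀ s) s :=
      (hθ (s, y) ⟨⟨hts, hsT⟩, trivial⟩).comp (f := fun r : ℝ => (r, y)) (by fun_prop)
        fun r hr => ⟨⟨hr.1, hr.2.le.trans hsT⟩, trivial⟩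
    exact le_of_tendsto hcont (eventually_nhdsWithin_of_forall fun r hr => (hbefore r hr y).le)
  refine ⟨s, ⟨hts', hsT⟩, x, le_antisymm (hnonpos x) hθsx, hnonpos, fun r hr => ?_⟩
  rcases hr.2.lt_or_eq with hrs | rfl
  · exact (hbefore r ⟨hr.1, hrs⟩ x).le
  · exact hnonpos x

noncomputable def extinctionProfile (q T s : ℝ) : ℝ := ((1 - q) * (T - s)) ^ (1 / (1 - q))

section ExtinctionProfile

variable {q T s : ℝ}

theorem extinctionProfile_pos (hq : q < 1) (hs : s < T) : 0 < extinctionProfile q T s :=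
  rpow_pos_of_pos (mul_pos (by linarith) (by linarith)) _

theorem extinctionProfile_self (hq : q < 1) : extinctionProfile q T T = 0 := by
  rw [extinctionProfile, sub_self, mul_zero, zero_rpow (one_div_pos.mpr (sub_pos.mpr hq)).ne']

theorem antitoneOn_extinctionProfile (hq : q < 1) : AntitoneOn (extinctionProfile q T) (Iic T) :=
  fun s₁ _ s₂ hs₂ h => rpow_le_rpow (mul_nonneg (by linarith) (by linarith [mem_Iic.mp hs₂]))
    (by gcongr) (one_div_pos.mpr (sub_pos.mpr hq)).le

theorem continuous_extinctionProfile (hq : q < 1) :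
    Continuous fun p : ℝ × ℝ => extinctionProfile q p.1 p.2 :=
  (by fun_prop : Continuous fun p : ℝ × ℝ => (1 - q) * (p.1 - p.2)).rpow_const
    fun _ => Or.inr (one_div_pos.mpr (sub_pos.mpr hq)).le

theorem hasDerivAt_extinctionProfile (hq : q < 1) (hs : s < T) :
    HasDerivAt (extinctionProfile q T) (-(extinctionProfile q T s ^ q)) s := by
  have hbase : 0 < (1 - q) * (T - s) := mul_pos (by linarith) (by linarith)
  have hinner : HasDerivAt (fun s => (1 - q) * (T - s)) (-(1 - q)) s := by
    simpa using ((hasDerivAt_id s).const_sub T).const_mul (1 - q)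
  refine (hinner.rpow_const (p := 1 / (1 - q)) (Or.inl hbase.ne')).congr_deriv ?_
  have hq' : 1 - q ≠ 0 := by linarith
  have hexp : 1 / (1 - q) - 1 = 1 / (1 - q) * q := by field_simp; ring
  rw [extinctionProfile, ← rpow_mul hbase.le, hexp]
  field_simp

end ExtinctionProfile

structure IsBoundedClassicalSolution {N : ℕ} (m q : ℝ) (u : ℝ → EuclideanSpace ℝ (Fin N) → ℝ) :
    Prop where
  continuousOn : ContinuousOn (fun p : ℝ × EuclideanSpace ℝ (Fin N) => u p.1 p.2) (Ici 0 ×ˢ univ)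
  nonneg : ∀ t x, 0 ≤ u t x
  bddAbove : ∃ M : ℝ, ∀ t x, u t x ≤ M
  contDiffOn_time : ∀ x, ContDiffOn ℝ 1 (fun τ => u τ x) (Ioi 0)
  contDiff_rpow_space : ∀ t, 0 < t → ContDiff ℝ 2 fun x => u t x ^ m
  deriv_time_eq : ∀ t, 0 < t → ∀ x,
    deriv (fun τ => u τ x) t = lapl (fun y => u t y ^ m) x - u t x ^ q

namespace IsBoundedClassicalSolution

variable {N : ℕ} {m q : ℝ} {u : ℝ → EuclideanSpace ℝ (Fin N) → ℝ}

theorem hasDerivAt_time (hu : IsBoundedClassicalSolution m q u) {s : ℝ} (hs : 0 < s)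
    (x : EuclideanSpace ℝ (Fin N)) :
    HasDerivAt (fun τ => u τ x) (deriv (fun τ => u τ x) s) s :=
  (((hu.contDiffOn_time x).contDiffAt (Ioi_mem_nhds hs)).differentiableAt one_ne_zero).hasDerivAt

theorem barrier_deriv_le_of_contact (hu : IsBoundedClassicalSolution m q u) (hm0 : 0 ≤ m)
    (hm1 : m ≤ 1) {w c : ℝ → ℝ} {w' c' t₀ s : ℝ} {x : EuclideanSpace ℝ (Fin N)} (hs : 0 < s)
    (ht₀s : t₀ < s) (hw : HasDerivAt w w' s) (hc : HasDerivAt c c' s) (hpos : 0 < u s x)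
    (habove : ∀ y, u s y ≤ w s + c s * (1 + ‖y‖ ^ 2))
    (hcontact : u s x = w s + c s * (1 + ‖x‖ ^ 2))
    (hbefore : ∀ r ∈ Icc t₀ s, u r x ≤ w r + c r * (1 + ‖x‖ ^ 2)) :
    w' + c' * (1 + ‖x‖ ^ 2) ≤ 2 * N * (m * u s x ^ (m - 1) * c s) - u s x ^ q := by
  have hlapl := lapl_rpow_le_of_le_quadratic (hu.nonneg s) hpos (hu.contDiff_rpow_space s hs)
    hm0 hm1 (a := w s + c s) (c := c s) (fun y => by linarith [habove y]) (by linarith)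
  have hderiv := (hu.hasDerivAt_time hs x).sub (hw.add (hc.mul_const (1 + ‖x‖ ^ 2)))
  have htime := hderiv.nonneg_of_isMaxOn_Icc ht₀s fun r hr => by
    dsimp
    linarith [hbefore r hr]
  rw [hu.deriv_time_eq s hs x] at htime
  linarith

theorem le_add_barrier (hu : IsBoundedClassicalSolution m q u) (hm0 : 0 ≤ m) (hm1 : m ≤ 1)
    (hq0 : 0 ≤ q) {w : ℝ → ℝ} {t₀ T δ σ K : ℝ} (ht₀ : 0 < t₀) (hδ : 0 < δ)
    (hwδ : ∀ s ∈ Icc t₀ T, δ ≤ w s) (hw : ∀ s ∈ Icc t₀ T, HasDerivAt w (-(w s ^ q)) s)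
    (hσ : 0 < σ) (hK : 2 * N * m * δ ^ (m - 1) < K) (hinit : ∀ x, u t₀ x ≤ w t₀) :
    ∀ s ∈ Icc t₀ T, ∀ x, u s x ≤ w s + σ * exp (K * (s - t₀)) * (1 + ‖x‖ ^ 2) := by
  set c : ℝ → ℝ := fun s => σ * exp (K * (s - t₀))
  set θ : ℝ × EuclideanSpace ℝ (Fin N) → ℝ :=
    fun p => u p.1 p.2 - (w p.1 + c p.1 * (1 + ‖p.2‖ ^ 2))
  intro s₁ hs₁ x₁
  by_contra! h₁
  obtain ⟨M, hM⟩ := hu.bddAbove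
  have hK0 : 0 ≤ K := lt_of_le_of_lt (by positivity) hK |>.le
  have hc : ∀ s, HasDerivAt c (K * c s) s := fun s => by
    have := (((hasDerivAt_id s).sub_const t₀).const_mul K).exp.const_mul σ
    simp only [id, mul_one] at this
    exact this.congr_deriv (by simp only [c]; ring)
  have hσc : ∀ s, t₀ ≤ s → σ ≤ c s := fun s hs =>
    le_mul_of_one_le_right hσ.le (one_le_exp (mul_nonneg hK0 (by linarith)))
  have hθcont : ContinuousOn θ (Icc t₀ T ×ˢ univ) := by
    have hwcont : ContinuousOn w (Icc t₀ T) := fun s hs =>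
      (hw s hs).continuousAt.continuousWithinAt
    refine (hu.continuousOn.mono (prod_mono (fun s hs => le_trans ht₀.le hs.1) subset_rfl)).sub
      ((hwcont.comp continuousOn_fst fun p hp => hp.1).add (Continuous.continuousOn ?_))
    fun_prop
  have hθR : ∀ s ∈ Icc t₀ T, ∀ x, 0 ≤ θ (s, x) → ‖x‖ ≤ √(M / σ) := fun s hs x hθ => by
    have hσ_le : σ * (1 + ‖x‖ ^ 2) ≤ c s * (1 + ‖x‖ ^ 2) :=
      mul_le_mul_of_nonneg_right (hσc s hs.1) (by positivity)
    refine le_sqrt_of_sq_le ((le_div_iff₀ hσ).mpr ?_)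
    linarith [hθ, hwδ s hs, hM s x]
  have hθinit : ∀ x, θ (t₀, x) < 0 := fun x => by
    have : 0 < σ * (1 + ‖x‖ ^ 2) := by positivity
    simp only [θ, c, sub_self, mul_zero, exp_zero, mul_one]
    linarith [hinit x]
  obtain ⟨s, ⟨hts, hsT⟩, x, hθx, hθs, hθr⟩ :=
    exists_first_contact hθcont hθR hθinit hs₁ (sub_nonneg.mpr h₁.le)
  have hcs : 0 < c s := by positivity
  have hcontact : u s x = w s + c s * (1 + ‖x‖ ^ 2) := sub_eq_zero.mp hθx
  have hwu : w s ≤ u s x := by nlinarith [sq_nonneg ‖x‖]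
  have hδu : δ ≤ u s x := (hwδ s ⟨hts.le, hsT⟩).trans hwu
  have key := hu.barrier_deriv_le_of_contact hm0 hm1 (ht₀.trans hts) hts (hw s ⟨hts.le, hsT⟩)
    (hc s) (hδ.trans_le hδu) (fun y => sub_nonpos.mp (hθs y)) hcontact
    (fun r hr => sub_nonpos.mp (hθr r hr))
  have hpow_m : u s x ^ (m - 1) ≤ δ ^ (m - 1) := rpow_le_rpow_of_nonpos hδ hδu (by linarith)
  have hpow_q : w s ^ q ≤ u s x ^ q := rpow_le_rpow (hδ.le.trans (hwδ s ⟨hts.le, hsT⟩)) hwu hq0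
  have hlapl : 2 * N * (m * u s x ^ (m - 1) * c s) ≤ 2 * N * (m * δ ^ (m - 1) * c s) := by
    gcongr
  nlinarith [mul_pos (sub_pos.mpr hK) hcs, mul_nonneg (mul_nonneg hK0 hcs.le) (sq_nonneg ‖x‖)]

theorem le_extinctionProfile (hu : IsBoundedClassicalSolution m q u) (hm0 : 0 ≤ m)
    (hm1 : m ≤ 1) (hq0 : 0 ≤ q) (hq1 : q < 1) {t₀ T : ℝ} (ht₀ : 0 < t₀)
    (hinit : ∀ x, u t₀ x ≤ extinctionProfile q T t₀) :
    ∀ s ∈ Ico t₀ T, ∀ x, u s x ≤ extinctionProfile q T s := by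
  intro s hs x
  set T' := (s + T) / 2
  have hsT' : s ≤ T' := by simp only [T']; linarith [hs.2]
  have hT'T : T' < T := by simp only [T']; linarith [hs.2]
  set K := 2 * N * m * extinctionProfile q T T' ^ (m - 1) + 1
  set E := exp (K * (s - t₀)) * (1 + ‖x‖ ^ 2)
  have hE : 0 < E := by positivity
  refine le_of_forall_pos_le_add fun ε hε => ?_
  have hbarrier := hu.le_add_barrier hm0 hm1 hq0 (T := T') ht₀ (extinctionProfile_pos hq1 hT'T)
    (fun r hr => antitoneOn_extinctionProfile hq1 (mem_Iic.mpr (hr.2.trans hT'T.le))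
      (mem_Iic.mpr hT'T.le) hr.2)
    (fun r hr => hasDerivAt_extinctionProfile hq1 (hr.2.trans_lt hT'T)) (div_pos hε hE)
    (lt_add_one _) hinit s ⟨hs.1, hsT'⟩ x
  rwa [mul_assoc, div_mul_cancel₀ _ hE.ne'] at hbarrier

theorem eq_zero_of_le_extinctionProfile (hu : IsBoundedClassicalSolution m q u) (hm0 : 0 ≤ m)
    (hm1 : m ≤ 1) (hq0 : 0 ≤ q) (hq1 : q < 1) {t₀ T : ℝ} (ht₀ : 0 < t₀) (ht₀T : t₀ < T)
    (hinit : ∀ x, u t₀ x ≤ extinctionProfile q T t₀) (x : EuclideanSpace ℝ (Fin N)) :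
    u T x = 0 := by
  have := right_nhdsWithin_Ico_neBot ht₀T
  have hu_cont : ContinuousWithinAt (fun s => u s x) (Ico t₀ T) T :=
    (hu.continuousOn (T, x) ⟨mem_Ici.mpr (by linarith), trivial⟩).comp
      (f := fun s : ℝ => (s, x)) (by fun_prop)
      fun s hs => ⟨mem_Ici.mpr (by linarith [hs.1]), trivial⟩
  have hw_cont : ContinuousWithinAt (extinctionProfile q T) (Ico t₀ T) T :=
    ((continuous_extinctionProfile hq1).comp (by fun_prop : Continuous fun s : ℝ => (T, s)))
      |>.continuousWithinAt
  refine le_antisymm ?_ (hu.nonneg T x)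
  rw [← extinctionProfile_self hq1 (T := T)]
  exact le_of_tendsto_of_tendsto hu_cont hw_cont (eventually_nhdsWithin_of_forall fun s hs =>
    hu.le_extinctionProfile hm0 hm1 hq0 hq1 ht₀ hinit s hs x)

end IsBoundedClassicalSolution

theorem stmt5_general {N : ℕ} {m q : ℝ}
    (hm : max ((N : ℝ) - 2) 0 / N < m) (hmq : m < q) (hq : q < 1)
(u : ℝ → EuclideanSpace ℝ (Fin N) → ℝ)
    (hu_cont : ContinuousOn (fun p : ℝ × EuclideanSpace ℝ (Fin N) => u p.1 p.2)
      (Set.Ici 0 ×ˢ Set.univ))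
    (hu_nonneg : ∀ t x, 0 ≤ u t x)
    (hu_bdd : ∃ M : ℝ, ∀ t x, u t x ≤ M)
    (hu_t : ∀ x, ContDiffOn ℝ 1 (fun τ => u τ x) (Set.Ioi 0))
    (hu_xm : ∀ t, 0 < t → ContDiff ℝ 2 (fun x => u t x ^ m))
    (hPDE : ∀ t, 0 < t → ∀ x,
      deriv (fun τ => u τ x) t = lapl (fun y => u t y ^ m) x - u t x ^ q)
(Te : ℝ)
    (hTe_lt : ∀ t, 0 ≤ t → t < Te → ∃ x, u t x ≠ 0) :
    ∃ c : ℝ, 0 < c ∧ ∀ t, 0 < t → t < Te →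
      c * (Te - t) ^ (1 / (1 - q)) ≤ ⨆ x, u t x := by
  have hm0 : 0 < m := (div_nonneg (le_max_right _ _) (Nat.cast_nonneg N)).trans_lt hm
  have hu : IsBoundedClassicalSolution m q u := ⟨hu_cont, hu_nonneg, hu_bdd, hu_t, hu_xm, hPDE⟩
  obtain ⟨M, hM⟩ := hu_bdd
  refine ⟨(1 - q) ^ (1 / (1 - q)), rpow_pos_of_pos (by linarith) _, fun t ht htTe => ?_⟩
  rw [← mul_rpow (by linarith) (by linarith)]
  change extinctionProfile q Te t ≤ _
  by_contra! hlt
  have hcont :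
      Tendsto (fun T => extinctionProfile q T t) (𝓝[<] Te) (𝓝 (extinctionProfile q Te t)) :=
    ((continuous_extinctionProfile hq).comp (by fun_prop : Continuous fun T : ℝ => (T, t))).tendsto
      Te |>.mono_left nhdsWithin_le_nhds
  obtain ⟨T, hT, hT_mem⟩ := ((hcont.eventually (lt_mem_nhds hlt)).and (Ioo_mem_nhdsLT htTe)).exists
  have hbdd : BddAbove (range (u t)) := ⟨M, forall_mem_range.mpr (hM t)⟩
  obtain ⟨x, hx⟩ := hTe_lt T (by linarith [hT_mem.1]) hT_mem.2
  exact hx (hu.eq_zero_of_le_extinctionProfile hm0.le (hmq.trans hq).le (hm0.trans hmq).le hq ht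
    hT_mem.1 (fun y => (le_ciSup hbdd y).trans hT.le) x)

/-- L^∞-lower bound near the extinction time, with some constant. -/
theorem stmt5 {N : ℕ} (hN : 1 ≤ N) {m q : ℝ}
    (hm : max ((N : ℝ) - 2) 0 / N < m) (hmq : m < q) (hq : q < 1)
(u : ℝ → EuclideanSpace ℝ (Fin N) → ℝ)
    (hu_cont : ContinuousOn (fun p : ℝ × EuclideanSpace ℝ (Fin N) => u p.1 p.2)
      (Set.Ici 0 ×ˢ Set.univ))
    (hu_nonneg : ∀ t x, 0 ≤ u t x)
    (hu_bdd : ∃ M : ℝ, ∀ t x, u t x ≤ M)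
    (hu_t : ∀ x, ContDiffOn ℝ 1 (fun τ => u τ x) (Set.Ioi 0))
    (hu_xm : ∀ t, 0 < t → ContDiff ℝ 2 (fun x => u t x ^ m))
    (hPDE : ∀ t, 0 < t → ∀ x,
      deriv (fun τ => u τ x) t = lapl (fun y => u t y ^ m) x - u t x ^ q)
(Te : ℝ) (hTe_pos : 0 < Te)
    (hTe_lt : ∀ t, 0 ≤ t → t < Te → ∃ x, u t x ≠ 0)
    (hTe_ge : ∀ t, Te ≤ t → ∀ x, u t x = 0)
(hu0_ne : ∃ x, u 0 x ≠ 0)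
    (κ₀ : ℝ) (hκ₀ : 0 < κ₀)
    (hdecay : ∀ x : EuclideanSpace ℝ (Fin N), x ≠ 0 →
      u 0 x ≤ κ₀ * ‖x‖ ^ (-2 / (q - m))) :
    ∃ c : ℝ, 0 < c ∧ ∀ t, 0 < t → t < Te →
      c * (Te - t) ^ (1 / (1 - q)) ≤ ⨆ x, u t x :=
  stmt5_general hm hmq hq u hu_cont hu_nonneg hu_bdd hu_t hu_xm hPDE Te hTe_lt
end

section
/- Let N ≥ 1 and 0 < m < q < 1, set κ_* := (2m(m+q)/(q−m)²)^{1/(q−m)}, and for κ > 0 define Σ_κ : ℝ^N∖{0} → ℝ by Σ_κ(x) := κ|x|^{−2/(q−m)}. Then for every x ∈ ℝ^N with x ≠ 0, −Δ(Σ_κ^m)(x) + Σ_κ(x)^q ≥ κ^m (κ^{q−m} − κ_*^{q−m}) |x|^{−2q/(q−m)}. In particular, if κ ≥ κ_*, then −Δ(Σ_κ^m)(x) + Σ_κ(x)^q ≥ 0 for all x ≠ 0, i.e. Σ_κ is a (stationary) supersolution of ∂_t u = Δ(u^m) − u^q on ℝ^N∖{0}. -/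
open MeasureTheory Real Set

/-!
`Σ_κ^m = κ^m |x|^α` with `α = -2m/(q-m)` is a radial power, and `Δ|x|^α = α(α+N-2)|x|^(α-2)`.
Since `α - 2 = -2q/(q-m)`, the diffusion and the absorption `Σ_κ^q = κ^q |x|^(-2q/(q-m))` are the
same power of `|x|`, so everything reduces to the coefficient inequality
`α(α+N-2) ≤ α(α-1) = κ_*^(q-m)`, valid because `α ≤ 0` and `N ≥ 1`.
Derivatives are taken of `(‖y‖²)^δ` rather than `‖y‖^α`, since `‖·‖²` is smooth.
-/

lemma hasFDerivAt_norm_sq_rpow {E : Type*} [NormedAddCommGroup E] [InnerProductSpace ℝ E]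
    (δ : ℝ) {y : E} (hy : y ≠ 0) :
    HasFDerivAt (fun z : E => (‖z‖ ^ 2) ^ δ) ((2 * δ * (‖y‖ ^ 2) ^ (δ - 1)) • innerSL ℝ y) y := by
  have h := (hasFDerivAt_id y).norm_sq.rpow_const (p := δ) (Or.inl (by positivity))
  refine h.congr_fderiv ?_
  ext v
  simp
  ring

section Euclidean

variable {N : ℕ}

local notation "e" => EuclideanSpace.single (𝕜 := ℝ) (ι := Fin N)

lemma fderiv_norm_sq_rpow_single (δ : ℝ) {y : EuclideanSpace ℝ (Fin N)} (hy : y ≠ 0)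
    (i : Fin N) :
    fderiv ℝ (fun z : EuclideanSpace ℝ (Fin N) => (‖z‖ ^ 2) ^ δ) y (e i 1) =
      2 * δ * ((‖y‖ ^ 2) ^ (δ - 1) * y i) := by
  rw [(hasFDerivAt_norm_sq_rpow δ hy).fderiv]
  simp [EuclideanSpace.inner_single_right]
  ring

lemma fderiv_const_mul_norm_sq_rpow_mul_coord_single (c γ : ℝ) {x : EuclideanSpace ℝ (Fin N)}
    (hx : x ≠ 0) (i : Fin N) :
    fderiv ℝ (fun y : EuclideanSpace ℝ (Fin N) => c * ((‖y‖ ^ 2) ^ γ * y i)) x (e i 1) =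
      c * ((‖x‖ ^ 2) ^ γ + 2 * γ * (‖x‖ ^ 2) ^ (γ - 1) * x i ^ 2) := by
  have h : HasFDerivAt (fun y : EuclideanSpace ℝ (Fin N) => c * ((‖y‖ ^ 2) ^ γ * y i)) _ x :=
    ((hasFDerivAt_norm_sq_rpow γ hx).mul
      (EuclideanSpace.proj i : EuclideanSpace ℝ (Fin N) →L[ℝ] ℝ).hasFDerivAt).const_mul c
  rw [h.fderiv]
  simp [EuclideanSpace.inner_single_right]
  ring

lemma lapl_norm_sq_rpow (δ : ℝ) {x : EuclideanSpace ℝ (Fin N)} (hx : x ≠ 0) :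
    lapl (fun y => (‖y‖ ^ 2) ^ δ) x = 2 * δ * (2 * δ + N - 2) * (‖x‖ ^ 2) ^ (δ - 1) := by
  have hpos : 0 < ‖x‖ ^ 2 := by positivity
  have hpartial (i : Fin N) :
      (fun y => fderiv ℝ (fun z : EuclideanSpace ℝ (Fin N) => (‖z‖ ^ 2) ^ δ) y (e i 1)) =ᶠ[nhds x]
        fun y => 2 * δ * ((‖y‖ ^ 2) ^ (δ - 1) * y i) := by
    filter_upwards [eventually_ne_nhds hx] with y hy
    exact fderiv_norm_sq_rpow_single δ hy i
  have hsum : ∑ i : Fin N, x i ^ 2 = ‖x‖ ^ 2 := by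
    simp [EuclideanSpace.norm_sq_eq]
  have hdrop : (‖x‖ ^ 2) ^ (δ - 1 - 1) * ‖x‖ ^ 2 = (‖x‖ ^ 2) ^ (δ - 1) := by
    rw [← rpow_add_one hpos.ne']
    ring_nf
  rw [lapl, Finset.sum_congr rfl fun i _ => by
    rw [(hpartial i).fderiv_eq, fderiv_const_mul_norm_sq_rpow_mul_coord_single _ _ hx i]]
  rw [← Finset.mul_sum, Finset.sum_add_distrib, ← Finset.mul_sum, hsum]
  simp only [Finset.sum_const, Finset.card_univ, Fintype.card_fin, nsmul_eq_mul]
  linear_combination (4 * δ * (δ - 1)) * hdrop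

lemma lapl_const_mul (c : ℝ) (f : EuclideanSpace ℝ (Fin N) → ℝ) (x : EuclideanSpace ℝ (Fin N)) :
    lapl (fun y => c * f y) x = c * lapl f x := by
  have hmul (g : EuclideanSpace ℝ (Fin N) → ℝ) :
      fderiv ℝ (fun y => c * g y) = c • fderiv ℝ g := fderiv_const_smul_field (f := g) c
  simp only [lapl, hmul, Pi.smul_apply, smul_apply, smul_eq_mul, Finset.mul_sum]

lemma lapl_norm_rpow (α : ℝ) {x : EuclideanSpace ℝ (Fin N)} (hx : x ≠ 0) :
    lapl (fun y => ‖y‖ ^ α) x = α * (α + N - 2) * ‖x‖ ^ (α - 2) := by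
  have hsq (y : EuclideanSpace ℝ (Fin N)) (β : ℝ) : ‖y‖ ^ β = (‖y‖ ^ 2) ^ (β / 2) := by
    rw [← rpow_natCast, ← rpow_mul (norm_nonneg y)]
    ring_nf
  simp only [hsq _ α, hsq x (α - 2), lapl_norm_sq_rpow _ hx]
  ring_nf

end Euclidean

noncomputable def criticalConstant (m q : ℝ) : ℝ :=
  (2 * m * (m + q) / (q - m) ^ 2) ^ (1 / (q - m))

section criticalConstant

variable {m q : ℝ}

lemma criticalConstant_base_nonneg (hm : 0 < m) (hmq : m < q) :
    0 ≤ 2 * m * (m + q) / (q - m) ^ 2 := by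
  have : 0 ≤ m + q := by linarith
  positivity

lemma criticalConstant_nonneg (hm : 0 < m) (hmq : m < q) : 0 ≤ criticalConstant m q :=
  rpow_nonneg (criticalConstant_base_nonneg hm hmq) _

lemma criticalConstant_rpow (hm : 0 < m) (hmq : m < q) :
    criticalConstant m q ^ (q - m) = 2 * m * (m + q) / (q - m) ^ 2 := by
  rw [criticalConstant, ← rpow_mul (criticalConstant_base_nonneg hm hmq),
    one_div_mul_cancel (sub_pos.mpr hmq).ne', rpow_one]

end criticalConstant

lemma lapl_const_mul_norm_rpow_rpow {N : ℕ} {κ : ℝ} (hκ : 0 ≤ κ) (a m : ℝ)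
    {x : EuclideanSpace ℝ (Fin N)} (hx : x ≠ 0) :
    lapl (fun y => (κ * ‖y‖ ^ a) ^ m) x =
      κ ^ m * (a * m) * (a * m + N - 2) * ‖x‖ ^ (a * m - 2) := by
  have hprofile : (fun y : EuclideanSpace ℝ (Fin N) => (κ * ‖y‖ ^ a) ^ m) =
      fun y => κ ^ m * ‖y‖ ^ (a * m) := by
    funext y
    rw [mul_rpow hκ (by positivity), ← rpow_mul (norm_nonneg y)]
  rw [hprofile, lapl_const_mul, lapl_norm_rpow _ hx]
  ring

lemma le_neg_lapl_add_rpow {N : ℕ} (hN : 1 ≤ N) {m q κ : ℝ} (hm : 0 < m) (hmq : m < q)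
    (hκ : 0 < κ) {x : EuclideanSpace ℝ (Fin N)} (hx : x ≠ 0) :
    κ ^ m * (κ ^ (q - m) - criticalConstant m q ^ (q - m)) * ‖x‖ ^ (-2 * q / (q - m)) ≤
      -lapl (fun y => (κ * ‖y‖ ^ (-2 / (q - m))) ^ m) x + (κ * ‖x‖ ^ (-2 / (q - m))) ^ q := by
  have hs : q - m ≠ 0 := (sub_pos.mpr hmq).ne'
  set α := -2 / (q - m) * m with hα
  have hα_nonpos : α ≤ 0 := mul_nonpos_of_nonpos_of_nonneg
    (div_nonpos_of_nonpos_of_nonneg (by norm_num) (sub_pos.mpr hmq).le) hm.le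
  have hexp : α - 2 = -2 * q / (q - m) := by
    rw [hα]; field_simp; ring
  have hcoeff : α * (α + N - 2) ≤ criticalConstant m q ^ (q - m) := by
    have hN' : (1 : ℝ) ≤ N := by exact_mod_cast hN
    have hcrit : criticalConstant m q ^ (q - m) = α * (α - 1) := by
      rw [criticalConstant_rpow hm hmq, hα]; field_simp; ring
    rw [hcrit]
    nlinarith
  have hreact : (κ * ‖x‖ ^ (-2 / (q - m))) ^ q =
      κ ^ m * κ ^ (q - m) * ‖x‖ ^ (-2 * q / (q - m)) := by
    rw [mul_rpow hκ.le (by positivity), ← rpow_mul (norm_nonneg x), ← rpow_add hκ]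
    congr 2 <;> [ring; field_simp]
  rw [lapl_const_mul_norm_rpow_rpow hκ.le _ _ hx, hexp, hreact]
  have hκm : 0 ≤ κ ^ m := by positivity
  have hr : 0 ≤ ‖x‖ ^ (-2 * q / (q - m)) := by positivity
  nlinarith [mul_nonneg (mul_nonneg hκm hr) (sub_nonneg.mpr hcoeff)]

theorem stmt9_general {N : ℕ} (hN : 1 ≤ N) (m q κ : ℝ)
    (hm : 0 < m) (hmq : m < q) (hκ : 0 < κ) :
    (∀ x : EuclideanSpace ℝ (Fin N), x ≠ 0 →
      κ ^ m * (κ ^ (q - m) -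
          ((2 * m * (m + q) / (q - m) ^ 2) ^ (1 / (q - m))) ^ (q - m)) *
          ‖x‖ ^ (-2 * q / (q - m)) ≤
        -lapl (fun y => (κ * ‖y‖ ^ (-2 / (q - m))) ^ m) x +
          (κ * ‖x‖ ^ (-2 / (q - m))) ^ q) ∧
    ((2 * m * (m + q) / (q - m) ^ 2) ^ (1 / (q - m)) ≤ κ →
      ∀ x : EuclideanSpace ℝ (Fin N), x ≠ 0 →
        0 ≤ -lapl (fun y => (κ * ‖y‖ ^ (-2 / (q - m))) ^ m) x +
          (κ * ‖x‖ ^ (-2 / (q - m))) ^ q) := by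
  refine ⟨fun x hx => le_neg_lapl_add_rpow hN hm hmq hκ hx, fun hκ_ge x hx => ?_⟩
  have hcrit_le : criticalConstant m q ^ (q - m) ≤ κ ^ (q - m) :=
    rpow_le_rpow (criticalConstant_nonneg hm hmq) hκ_ge (sub_pos.mpr hmq).le
  refine le_trans ?_ (le_neg_lapl_add_rpow hN hm hmq hκ hx)
  exact mul_nonneg (mul_nonneg (by positivity) (sub_nonneg.mpr hcrit_le)) (by positivity)

/-- The profile $Σ_κ(x) = κ|x|^{-2/(q-m)}$ is a stationary supersolution for $κ ≥ κ_*$. -/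
theorem stmt9 {N : ℕ} (hN : 1 ≤ N) (m q κ : ℝ)
    (hm : 0 < m) (hmq : m < q) (hq : q < 1) (hκ : 0 < κ) :
    (∀ x : EuclideanSpace ℝ (Fin N), x ≠ 0 →
      κ ^ m * (κ ^ (q - m) -
          ((2 * m * (m + q) / (q - m) ^ 2) ^ (1 / (q - m))) ^ (q - m)) *
          ‖x‖ ^ (-2 * q / (q - m)) ≤
        -lapl (fun y => (κ * ‖y‖ ^ (-2 / (q - m))) ^ m) x +
          (κ * ‖x‖ ^ (-2 / (q - m))) ^ q) ∧
    ((2 * m * (m + q) / (q - m) ^ 2) ^ (1 / (q - m)) ≤ κ →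
      ∀ x : EuclideanSpace ℝ (Fin N), x ≠ 0 →
        0 ≤ -lapl (fun y => (κ * ‖y‖ ^ (-2 / (q - m))) ^ m) x +
          (κ * ‖x‖ ^ (-2 / (q - m))) ^ q) :=
  stmt9_general hN m q κ hm hmq hκ
end

section
/- Let a > 1, b ≥ 0, c ∈ ℝ, C₀ ≥ 1, C₁ ≥ 1, and p₀ > 0 be such that p₀(a−1) + c > 0. Define the sequence (p_k)_{k≥0} by p_{k+1} = a p_k + c for k ≥ 0 (so each p_k is positive). If (Q_k)_{k≥0} is a sequence of positive real numbers satisfying Q₀ ≤ C₁^{p₀} and Q_{k+1} ≤ C₀ p_{k+1}^b · max{C₁^{p_{k+1}}, Q_k^a} for all k ≥ 0, then the sequence (Q_k^{1/p_k})_{k≥0} is bounded. -/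
/-!
Since `p_k + c/(a-1) = a^k (p_0 + c/(a-1))`, the exponents satisfy `m a^k ≤ p_k ≤ M a^k`.
In logarithms, `r_k := max (p_k log C₁) (log Q_k)` obeys `r_{k+1} ≤ a r_k + A + B k`, and
every such sequence is `O(a^k)`: adding `u k + v` for suitable `u, v ≥ 0` turns the recursion
into `y_{k+1} ≤ a y_k`. Hence `log Q_k / p_k ≤ K a^k / (m a^k)` stays bounded.
-/

open Real

lemma exists_le_mul_pow_of_le_mul_add {a A B : ℝ} (ha : 1 < a) (hA : 0 ≤ A) (hB : 0 ≤ B)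
    {x : ℕ → ℝ} (hx : ∀ k, x (k + 1) ≤ a * x k + A + B * k) :
    ∃ K ≥ 1, ∀ k, x k ≤ K * a ^ k := by
  have ha₁ : 0 < a - 1 := sub_pos.2 ha
  set u := B / (a - 1)
  set v := (A + u) / (a - 1)
  have hu : 0 ≤ u := by positivity
  have hv : 0 ≤ v := by positivity
  have hu' : (a - 1) * u = B := mul_div_cancel₀ _ ha₁.ne'
  have hv' : (a - 1) * v = A + u := mul_div_cancel₀ _ ha₁.ne'
  clear_value u v
  have hgeom : ∀ n, x n + u * n + v ≤ a ^ n * (x 0 + v) := fun n => by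
    simpa using le_geom (u := fun k => x k + u * k + v) (by linarith) n fun k _ => by
      push_cast
      linear_combination hx k - (k : ℝ) * hu' - hv'
  refine ⟨max (x 0 + v) 1, le_max_right _ _, fun k => ?_⟩
  calc x k ≤ x k + u * k + v := by nlinarith [mul_nonneg hu (Nat.cast_nonneg (α := ℝ) k)]
    _ ≤ a ^ k * (x 0 + v) := hgeom k
    _ ≤ max (x 0 + v) 1 * a ^ k := by
      rw [mul_comm]; gcongr; exact le_max_left _ _

lemma affine_rec_add_eq_pow_mul {a c : ℝ} (ha : a ≠ 1) {p : ℕ → ℝ}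
    (hp : ∀ k, p (k + 1) = a * p k + c) (k : ℕ) :
    p k + c / (a - 1) = a ^ k * (p 0 + c / (a - 1)) := by
  have hc : c + c / (a - 1) = a * (c / (a - 1)) := by
    field_simp [sub_ne_zero.2 ha]; ring
  induction k with
  | zero => simp
  | succ k ih =>
    rw [hp, pow_succ, mul_comm _ a, mul_assoc, ← ih]
    linear_combination hc

lemma exists_pos_mul_pow_le_of_affine_rec {a c : ℝ} (ha : 1 < a) {p : ℕ → ℝ}
    (hp₀ : 0 < p 0) (hpc : 0 < p 0 * (a - 1) + c) (hp : ∀ k, p (k + 1) = a * p k + c) :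
    ∃ m > 0, ∀ k, m * a ^ k ≤ p k := by
  set δ := c / (a - 1)
  have hδ : 0 < p 0 + δ := by
    have : p 0 + δ = (p 0 * (a - 1) + c) / (a - 1) := by
      rw [eq_div_iff (sub_pos.2 ha).ne', add_mul, div_mul_cancel₀ _ (sub_pos.2 ha).ne']
    rw [this]; exact div_pos hpc (sub_pos.2 ha)
  refine ⟨min (p 0) (p 0 + δ), lt_min hp₀ hδ, fun k => ?_⟩
  have hk := affine_rec_add_eq_pow_mul ha.ne' hp k
  have hak : 1 ≤ a ^ k := one_le_pow₀ ha.le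
  have hak₀ : 0 ≤ a ^ k := by positivity
  rcases le_total 0 δ with hδ₀ | hδ₀
  · nlinarith [mul_le_mul_of_nonneg_right (min_le_left (p 0) (p 0 + δ)) hak₀]
  · nlinarith [mul_le_mul_of_nonneg_right (min_le_right (p 0) (p 0 + δ)) hak₀]

lemma max_log_le_of_le_mul_max {a b c C₀ C₁ p p' Q Q' ℓ : ℝ} (ha : 0 ≤ a) (hb : 0 ≤ b)
    (hC₀ : 1 ≤ C₀) (hC₁ : 1 ≤ C₁) (hp' : p' = a * p + c) (hp'pos : 0 < p')
    (hℓ : 0 ≤ ℓ) (hlogp' : log p' ≤ ℓ) (hQ : 0 < Q) (hQ' : 0 < Q')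
    (h : Q' ≤ C₀ * p' ^ b * max (C₁ ^ p') (Q ^ a)) :
    max (p' * log C₁) (log Q') ≤
      a * max (p * log C₁) (log Q) + (log C₀ + b * ℓ + max c 0 * log C₁) := by
  set r := max (p * log C₁) (log Q)
  have hL : 0 ≤ log C₁ := log_nonneg hC₁
  have hL₀ : 0 ≤ log C₀ := log_nonneg hC₀
  have hc : c * log C₁ ≤ max c 0 * log C₁ :=
    mul_le_mul_of_nonneg_right (le_max_left c 0) hL
  have hc₀ : 0 ≤ max c 0 * log C₁ := mul_nonneg (le_max_right c 0) hL
  have hpL : p' * log C₁ ≤ a * r + max c 0 * log C₁ := by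
    have := mul_le_mul_of_nonneg_left (le_max_left (p * log C₁) (log Q)) ha
    rw [hp']; linarith
  have hQa : a * log Q ≤ a * r := mul_le_mul_of_nonneg_left (le_max_right _ _) ha
  have hmax : log (max (C₁ ^ p') (Q ^ a)) ≤ a * r + max c 0 * log C₁ := by
    rcases max_cases (C₁ ^ p') (Q ^ a) with ⟨hm, -⟩ | ⟨hm, -⟩ <;> rw [hm]
    · rw [log_rpow (by linarith)]; linarith
    · rw [log_rpow hQ]; linarith
  have hlogQ' : log Q' ≤ log C₀ + b * log p' + log (max (C₁ ^ p') (Q ^ a)) := by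
    have hmpos : 0 < max (C₁ ^ p') (Q ^ a) := lt_max_of_lt_right (rpow_pos_of_pos hQ a)
    calc log Q' ≤ log (C₀ * p' ^ b * max (C₁ ^ p') (Q ^ a)) := log_le_log hQ' h
      _ = _ := by
        rw [log_mul (by positivity) hmpos.ne', log_mul (by positivity) (by positivity),
          log_rpow hp'pos]
  have hbℓ : b * log p' ≤ b * ℓ := mul_le_mul_of_nonneg_left hlogp' hb
  have hbℓ₀ : 0 ≤ b * ℓ := mul_nonneg hb hℓ
  exact max_le (by linarith) (by linarith)

lemma rpow_one_div_le_exp_of_log_le {x p t : ℝ} (hx : 0 < x) (hp : 0 < p)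
    (h : log x ≤ t * p) : x ^ (1 / p) ≤ exp t := by
  rw [rpow_def_of_pos hx, exp_le_exp, mul_one_div, div_le_iff₀ hp]
  exact h

theorem stmt13_general (a b c C₀ C₁ : ℝ) (ha : 1 < a) (hb : 0 ≤ b)
    (hC₀ : 1 ≤ C₀) (hC₁ : 1 ≤ C₁)
    (p : ℕ → ℝ) (hp₀ : 0 < p 0) (hpc : p 0 * (a - 1) + c > 0)
    (hp : ∀ k, p (k + 1) = a * p k + c)
    (Q : ℕ → ℝ) (hQpos : ∀ k, 0 < Q k)
    (hQ : ∀ k, Q (k + 1) ≤ C₀ * p (k + 1) ^ b * max (C₁ ^ p (k + 1)) (Q k ^ a)) :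
    ∃ M : ℝ, ∀ k, Q k ^ (1 / p k) ≤ M := by
  obtain ⟨m, hm, hlow⟩ := exists_pos_mul_pow_le_of_affine_rec ha hp₀ hpc hp
  have hppos : ∀ k, 0 < p k := fun k => (by positivity : 0 < m * a ^ k).trans_le (hlow k)
  obtain ⟨M, hM, hup⟩ := exists_le_mul_pow_of_le_mul_add ha (abs_nonneg c) le_rfl (x := p)
    fun k => by rw [hp]; linarith [le_abs_self c]
  have hloga : 0 ≤ log a := log_nonneg ha.le
  have hlogp : ∀ k : ℕ, log (p (k + 1)) ≤ log M + log a * (k + 1) := fun k => by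
    calc log (p (k + 1)) ≤ log (M * a ^ (k + 1)) := log_le_log (hppos _) (hup _)
      _ = _ := by rw [log_mul (by positivity) (by positivity), log_pow]; push_cast; ring
  set r : ℕ → ℝ := fun k => max (p k * log C₁) (log (Q k))
  have hr : ∀ k : ℕ, r (k + 1) ≤
      a * r k + (log C₀ + b * (log M + log a) + max c 0 * log C₁) + b * log a * k := fun k => by
    calc r (k + 1) ≤ a * r k + (log C₀ + b * (log M + log a * (k + 1)) + max c 0 * log C₁) :=
          max_log_le_of_le_mul_max (by linarith) hb hC₀ hC₁ (hp k) (hppos _)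
            (by have := log_nonneg hM; positivity) (hlogp k) (hQpos k) (hQpos _) (hQ k)
      _ = _ := by ring
  have hA : 0 ≤ log C₀ + b * (log M + log a) + max c 0 * log C₁ := by
    have := log_nonneg hC₀; have := log_nonneg hC₁; have := log_nonneg hM
    have := le_max_right c 0; positivity
  obtain ⟨K, hK, hrK⟩ := exists_le_mul_pow_of_le_mul_add ha hA (mul_nonneg hb hloga) hr
  refine ⟨exp (K / m), fun k => rpow_one_div_le_exp_of_log_le (hQpos k) (hppos k) ?_⟩
  calc log (Q k) ≤ r k := le_max_right _ _
    _ ≤ K * a ^ k := hrK k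
    _ = K / m * (m * a ^ k) := by field_simp
    _ ≤ K / m * p k := by gcongr; exact hlow k

/-- Moser-type iteration lemma (Lemma A.1 of [La94]). -/
theorem stmt13 (a b c C₀ C₁ : ℝ) (ha : 1 < a) (hb : 0 ≤ b)
    (hC₀ : 1 ≤ C₀) (hC₁ : 1 ≤ C₁)
    (p : ℕ → ℝ) (hp₀ : 0 < p 0) (hpc : p 0 * (a - 1) + c > 0)
    (hp : ∀ k, p (k + 1) = a * p k + c)
    (Q : ℕ → ℝ) (hQpos : ∀ k, 0 < Q k)
    (hQ₀ : Q 0 ≤ C₁ ^ p 0)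
    (hQ : ∀ k, Q (k + 1) ≤ C₀ * p (k + 1) ^ b * max (C₁ ^ p (k + 1)) (Q k ^ a)) :
    ∃ M : ℝ, ∀ k, Q k ^ (1 / p k) ≤ M :=
  stmt13_general a b c C₀ C₁ ha hb hC₀ hC₁ p hp₀ hpc hp Q hQpos hQ
end

section
/- Let N ≥ 1 and let m, q satisfy (N−2)_+/N < m < q < 1 (so that 2q/(q−m) > N). Let K > 0 and let f : ℝ^N → [0,∞) be measurable and integrable with f(x) ≤ K|x|^{−2/(q−m)} for almost every x ∈ ℝ^N∖{0}. Then there exists a constant C > 0 depending only on N, m, q, and K such that ∫_{ℝ^N} f(x)^q dx ≤ C (∫_{ℝ^N} f(x) dx)^{(N(m−q)+2q)/(N(m−q)+2)}. -/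
/-!
Split space at a radius `R`. On the ball `B_R`, Hölder's inequality with exponents `1/q` and
`1/(1-q)` gives `∫_{B_R} f^q ≤ (∫ f)^q |B_R|^{1-q}`. Outside, the decay bound gives
`f^q ≤ K^q |x|^{-α}` with `α = 2q/(q-m) > N`, and by scaling `∫_{|x| ≥ R} |x|^{-α} = c R^{N-α}`
with `c < ∞`. For `R = (∫ f)^{-(q-m)/(N(m-q)+2)}` both terms are constant multiples of
`(∫ f)^{(N(m-q)+2q)/(N(m-q)+2)}`.
-/

open MeasureTheory Real Set Metric Module

open scoped ENNReal

theorem lintegral_rpow_le_mul_measure_univ_rpow {α : Type*} [MeasurableSpace α] (μ : Measure α)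
    {p : ℝ} (hp0 : 0 < p) (hp1 : p < 1) {g : α → ℝ≥0∞} (hg : AEMeasurable g μ) :
    ∫⁻ x, g x ^ p ∂μ ≤ (∫⁻ x, g x ∂μ) ^ p * μ univ ^ (1 - p) := by
  have hpq : (1 / p).HolderConjugate (1 / (1 - p)) := by
    rw [Real.holderConjugate_iff]
    exact ⟨by rw [lt_div_iff₀ hp0]; linarith, by simp⟩
  have hgp : ∀ x, (g x ^ p) ^ p⁻¹ = g x := fun x => by
    rw [← ENNReal.rpow_mul, mul_inv_cancel₀ hp0.ne', ENNReal.rpow_one]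
  simpa [hgp] using ENNReal.lintegral_mul_le_Lp_mul_Lq μ hpq (hg.pow_const p) aemeasurable_const
    (g := fun _ => 1)

section HaarMeasure

variable {E : Type*} [NormedAddCommGroup E] [NormedSpace ℝ E] [FiniteDimensional ℝ E]
  [MeasurableSpace E] [BorelSpace E] (μ : Measure E) [μ.IsAddHaarMeasure]

theorem setLIntegral_compl_ball_norm_rpow_neg (α : ℝ) {R : ℝ} (hR : 0 < R) :
    ∫⁻ x in (ball (0 : E) R)ᶜ, ENNReal.ofReal (‖x‖ ^ (-α)) ∂μ =
      ENNReal.ofReal (R ^ ((finrank ℝ E : ℝ) - α)) *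
        ∫⁻ y in (ball (0 : E) 1)ᶜ, ENNReal.ofReal (‖y‖ ^ (-α)) ∂μ := by
  have hpre : (R⁻¹ • · : E → E) ⁻¹' (ball 0 1)ᶜ = (ball 0 R)ᶜ := by
    ext x
    simp [norm_smul, abs_of_pos hR, inv_mul_eq_div, le_div_iff₀ hR]
  have hhom : ∀ x : E, ‖x‖ ^ (-α) = R ^ (-α) * ‖R⁻¹ • x‖ ^ (-α) := fun x => by
    rw [norm_smul, Real.norm_eq_abs, abs_of_pos (inv_pos.2 hR),
      Real.mul_rpow (inv_nonneg.2 hR.le) (norm_nonneg _), Real.inv_rpow hR.le, ← mul_assoc,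
      mul_inv_cancel₀ (Real.rpow_pos_of_pos hR _).ne', one_mul]
  have hmap : Measure.map (R⁻¹ • · : E → E) μ = ENNReal.ofReal (R ^ finrank ℝ E) • μ := by
    rw [Measure.map_addHaar_smul μ (inv_ne_zero hR.ne'), inv_pow, inv_inv,
      abs_of_pos (pow_pos hR _)]
  calc ∫⁻ x in (ball (0 : E) R)ᶜ, ENNReal.ofReal (‖x‖ ^ (-α)) ∂μ
      = ENNReal.ofReal (R ^ (-α)) *
          ∫⁻ x in (R⁻¹ • · : E → E) ⁻¹' (ball 0 1)ᶜ, ENNReal.ofReal (‖R⁻¹ • x‖ ^ (-α)) ∂μ := by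
        rw [hpre, ← lintegral_const_mul _ (by fun_prop)]
        refine lintegral_congr fun x => ?_
        rw [hhom x, ENNReal.ofReal_mul (Real.rpow_nonneg hR.le _)]
    _ = ENNReal.ofReal (R ^ (-α)) * ENNReal.ofReal (R ^ finrank ℝ E) *
          ∫⁻ y in (ball (0 : E) 1)ᶜ, ENNReal.ofReal (‖y‖ ^ (-α)) ∂μ := by
        rw [← setLIntegral_map (f := fun y => ENNReal.ofReal (‖y‖ ^ (-α)))
          measurableSet_ball.compl (by fun_prop) (measurable_const_smul _),
          hmap, Measure.restrict_smul, lintegral_smul_measure, smul_eq_mul, mul_assoc]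
    _ = _ := by
        rw [← ENNReal.ofReal_mul (Real.rpow_nonneg hR.le _), ← Real.rpow_natCast,
          ← Real.rpow_add hR, neg_add_eq_sub]

theorem setLIntegral_compl_ball_norm_rpow_neg_lt_top {α : ℝ} (hα : (finrank ℝ E : ℝ) < α) :
    ∫⁻ y in (ball (0 : E) 1)ᶜ, ENNReal.ofReal (‖y‖ ^ (-α)) ∂μ < ∞ := by
  have hα0 : 0 < α := (Nat.cast_nonneg _).trans_lt hα
  have hbound : ∀ y ∈ (ball (0 : E) 1)ᶜ, ‖y‖ ^ (-α) ≤ 2 ^ α * (1 + ‖y‖) ^ (-α) := by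
    intro y hy
    have hy1 : 1 ≤ ‖y‖ := by simpa using hy
    calc ‖y‖ ^ (-α) ≤ ((1 + ‖y‖) / 2) ^ (-α) :=
          Real.rpow_le_rpow_of_nonpos (by positivity) (by linarith) (by linarith)
      _ = 2 ^ α * (1 + ‖y‖) ^ (-α) := by
          rw [Real.div_rpow (by positivity) zero_le_two, Real.rpow_neg zero_le_two, div_inv_eq_mul,
            mul_comm]
  calc ∫⁻ y in (ball (0 : E) 1)ᶜ, ENNReal.ofReal (‖y‖ ^ (-α)) ∂μ
      ≤ ∫⁻ y, ENNReal.ofReal (2 ^ α) * ENNReal.ofReal ((1 + ‖y‖) ^ (-α)) ∂μ := by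
        refine (setLIntegral_mono (by fun_prop) fun y hy => ?_).trans
          (setLIntegral_le_lintegral _ _)
        rw [← ENNReal.ofReal_mul (by positivity)]
        exact ENNReal.ofReal_le_ofReal (hbound y hy)
    _ < ∞ := by
        rw [lintegral_const_mul _ (by fun_prop)]
        exact ENNReal.mul_lt_top ENNReal.ofReal_lt_top (finite_integral_one_add_norm hα)

theorem lintegral_rpow_le_of_decay_of_radius {p β : ℝ} {K : ℝ≥0∞} (hp0 : 0 < p) (hp1 : p < 1)
    {g : E → ℝ≥0∞} (hg : AEMeasurable g μ)
    (hdecay : ∀ᵐ x ∂μ, x ≠ 0 → g x ≤ K * ENNReal.ofReal (‖x‖ ^ (-β))) {R : ℝ} (hR : 0 < R) :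
    ∫⁻ x, g x ^ p ∂μ ≤
      (∫⁻ x, g x ∂μ) ^ p * (ENNReal.ofReal (R ^ finrank ℝ E) * μ (ball 0 1)) ^ (1 - p) +
        K ^ p * ENNReal.ofReal (R ^ ((finrank ℝ E : ℝ) - p * β)) *
          ∫⁻ y in (ball (0 : E) 1)ᶜ, ENNReal.ofReal (‖y‖ ^ (-(p * β))) ∂μ := by
  rw [← lintegral_add_compl _ (measurableSet_ball (x := (0 : E)) (ε := R))]
  gcongr ?_ + ?_
  · calc ∫⁻ x in ball 0 R, g x ^ p ∂μ
        ≤ (∫⁻ x in ball 0 R, g x ∂μ) ^ p * μ.restrict (ball 0 R) univ ^ (1 - p) :=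
          lintegral_rpow_le_mul_measure_univ_rpow _ hp0 hp1 hg.restrict
      _ ≤ (∫⁻ x, g x ∂μ) ^ p * (ENNReal.ofReal (R ^ finrank ℝ E) * μ (ball 0 1)) ^ (1 - p) := by
          rw [Measure.restrict_apply_univ, Measure.addHaar_ball_of_pos μ 0 hR]
          gcongr
          exact Measure.restrict_le_self
  · calc ∫⁻ x in (ball 0 R)ᶜ, g x ^ p ∂μ
        ≤ ∫⁻ x in (ball 0 R)ᶜ, K ^ p * ENNReal.ofReal (‖x‖ ^ (-(p * β))) ∂μ := by
          refine setLIntegral_mono_ae (by fun_prop) ?_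
          filter_upwards [hdecay] with x hx hxR
          have hx0 : x ≠ 0 := by rintro rfl; simp [hR] at hxR
          calc g x ^ p ≤ (K * ENNReal.ofReal (‖x‖ ^ (-β))) ^ p := by gcongr; exact hx hx0
            _ = K ^ p * ENNReal.ofReal (‖x‖ ^ (-(p * β))) := by
              rw [ENNReal.mul_rpow_of_nonneg _ _ hp0.le,
                ENNReal.ofReal_rpow_of_nonneg (by positivity) hp0.le,
                ← Real.rpow_mul (norm_nonneg _),
                neg_mul, mul_comm β]
      _ = _ := by
          rw [lintegral_const_mul _ (by fun_prop), setLIntegral_compl_ball_norm_rpow_neg μ _ hR,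
            mul_assoc]

theorem lintegral_rpow_le_mul_lintegral_rpow_of_decay {p β : ℝ} {K : ℝ≥0∞} (hp0 : 0 < p)
    (hp1 : p < 1) (hβ : (finrank ℝ E : ℝ) < p * β) {g : E → ℝ≥0∞} (hg : AEMeasurable g μ)
    (hdecay : ∀ᵐ x ∂μ, x ≠ 0 → g x ≤ K * ENNReal.ofReal (‖x‖ ^ (-β))) :
    ∫⁻ x, g x ^ p ∂μ ≤
      (μ (ball 0 1) ^ (1 - p) +
          K ^ p * ∫⁻ y in (ball (0 : E) 1)ᶜ, ENNReal.ofReal (‖y‖ ^ (-(p * β))) ∂μ) *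
        (∫⁻ x, g x ∂μ) ^ ((p * β - finrank ℝ E) / (β - finrank ℝ E)) := by
  set d : ℝ := (finrank ℝ E : ℝ)
  set θ := (p * β - d) / (β - d)
  have hdβ : d < β := by nlinarith [(Nat.cast_nonneg _ : (0 : ℝ) ≤ finrank ℝ E)]
  have hθ : 0 < θ := div_pos (by linarith) (by linarith)
  rcases eq_or_ne (∫⁻ x, g x ∂μ) 0 with hI0 | hI0
  · have hgp : ∫⁻ x, g x ^ p ∂μ = 0 := by
      rw [lintegral_eq_zero_iff' (hg.pow_const p)]
      filter_upwards [(lintegral_eq_zero_iff' hg).1 hI0] with x hx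
      simp [hx, hp0]
    simp [hgp]
  rcases eq_or_ne (∫⁻ x, g x ∂μ) ∞ with hItop | hItop
  · have hball : μ (ball 0 1) ^ (1 - p) ≠ 0 :=
      (ENNReal.rpow_pos (measure_ball_pos μ 0 one_pos) measure_ball_lt_top.ne).ne'
    rw [hItop, ENNReal.top_rpow_of_pos hθ, ENNReal.mul_top (by simp [hball])]
    exact le_top
  set i := (∫⁻ x, g x ∂μ).toReal
  have hi : 0 < i := ENNReal.toReal_pos hI0 hItop
  -- `R` makes both terms of `lintegral_rpow_le_of_decay_of_radius` scale like `i ^ θ`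
  set R := i ^ (-(β - d)⁻¹)
  have hR : 0 < R := Real.rpow_pos_of_pos hi _
  have hball : i ^ p * (R ^ finrank ℝ E) ^ (1 - p) = i ^ θ := by
    rw [← Real.rpow_natCast, ← Real.rpow_mul hi.le, ← Real.rpow_mul hi.le, ← Real.rpow_add hi]
    congr 1
    have : β - d ≠ 0 := by linarith
    simp only [θ, d] at this ⊢
    field_simp
    ring
  have hcompl : R ^ (d - p * β) = i ^ θ := by
    rw [← Real.rpow_mul hi.le]
    congr 1
    field_simp
    ring
  refine (lintegral_rpow_le_of_decay_of_radius μ hp0 hp1 hg hdecay hR).trans_eq ?_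
  rw [← ENNReal.ofReal_toReal hItop, ENNReal.ofReal_rpow_of_nonneg hi.le hp0.le,
    ENNReal.mul_rpow_of_nonneg _ _ (by linarith),
    ENNReal.ofReal_rpow_of_nonneg (by positivity) (by linarith), ← mul_assoc,
    ← ENNReal.ofReal_mul (by positivity), hball, hcompl,
    ENNReal.ofReal_rpow_of_nonneg hi.le hθ.le]
  ring

theorem exists_lintegral_ofReal_rpow_le_of_decay {p β K : ℝ} (hp0 : 0 < p) (hp1 : p < 1)
    (hβ : (finrank ℝ E : ℝ) < p * β) (hK : 0 ≤ K) :
    ∃ C : ℝ, 0 < C ∧ ∀ f : E → ℝ, (∀ x, 0 ≤ f x) → Integrable f μ →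
      (∀ᵐ x ∂μ, x ≠ 0 → f x ≤ K * ‖x‖ ^ (-β)) →
      ∫⁻ x, ENNReal.ofReal (f x ^ p) ∂μ ≤
        ENNReal.ofReal (C * (∫ x, f x ∂μ) ^ ((p * β - finrank ℝ E) / (β - finrank ℝ E))) := by
  have hθ : 0 ≤ (p * β - finrank ℝ E) / (β - finrank ℝ E) :=
    div_nonneg (by linarith) (by nlinarith [(Nat.cast_nonneg _ : (0 : ℝ) ≤ finrank ℝ E)])
  set C := μ (ball 0 1) ^ (1 - p) +
    ENNReal.ofReal K ^ p * ∫⁻ y in (ball (0 : E) 1)ᶜ, ENNReal.ofReal (‖y‖ ^ (-(p * β))) ∂μ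
  have hC : C ≠ ∞ := by
    refine ENNReal.add_ne_top.2 ⟨ENNReal.rpow_ne_top_of_nonneg (by linarith)
      measure_ball_lt_top.ne, ENNReal.mul_ne_top (by simp [hp0.le]) ?_⟩
    exact (setLIntegral_compl_ball_norm_rpow_neg_lt_top μ hβ).ne
  refine ⟨C.toReal + 1, by positivity, fun f hf0 hfi hdecay => ?_⟩
  have hdecay' : ∀ᵐ x ∂μ, x ≠ 0 →
      ENNReal.ofReal (f x) ≤ ENNReal.ofReal K * ENNReal.ofReal (‖x‖ ^ (-β)) := by
    filter_upwards [hdecay] with x hx hx0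
    rw [← ENNReal.ofReal_mul hK]
    exact ENNReal.ofReal_le_ofReal (hx hx0)
  calc ∫⁻ x, ENNReal.ofReal (f x ^ p) ∂μ
      = ∫⁻ x, ENNReal.ofReal (f x) ^ p ∂μ := by
        simp_rw [ENNReal.ofReal_rpow_of_nonneg (hf0 _) hp0.le]
    _ ≤ C * ENNReal.ofReal (∫ x, f x ∂μ) ^ ((p * β - finrank ℝ E) / (β - finrank ℝ E)) := by
        rw [ofReal_integral_eq_lintegral_ofReal hfi (Filter.Eventually.of_forall hf0)]
        exact lintegral_rpow_le_mul_lintegral_rpow_of_decay μ hp0 hp1 hβ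
          hfi.aemeasurable.ennreal_ofReal hdecay'
    _ ≤ _ := by
        rw [ENNReal.ofReal_rpow_of_nonneg (integral_nonneg hf0) hθ,
          ENNReal.ofReal_mul (by positivity)]
        gcongr
        exact (ENNReal.ofReal_toReal hC).symm.le.trans (ENNReal.ofReal_le_ofReal (by linarith))

end HaarMeasure

theorem natCast_mul_sub_add_two_mul_pos {N : ℕ} {m q : ℝ} (hm : max ((N : ℝ) - 2) 0 / N < m)
    (hmq : m < q) (hq : q < 1) : 0 < (N : ℝ) * (m - q) + 2 * q := by
  have hm0 : 0 < m := (div_nonneg (le_max_right _ _) N.cast_nonneg).trans_lt hm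
  rcases N.eq_zero_or_pos with rfl | hN
  · simp only [Nat.cast_zero, zero_mul, zero_add]
    linarith
  have hN' : (0 : ℝ) < N := by exact_mod_cast hN
  have hNm : (N : ℝ) - 2 < N * m := by
    rw [div_lt_iff₀ hN', mul_comm] at hm
    exact (le_max_left _ _).trans_lt hm
  rcases le_total (N : ℝ) 2 with h2 | h2
  · nlinarith
  · nlinarith

theorem stmt16_general {N : ℕ} (m q K : ℝ)
    (hm : max ((N : ℝ) - 2) 0 / N < m) (hmq : m < q) (hq : q < 1) (hK : 0 < K) :
    ∃ C : ℝ, 0 < C ∧ ∀ f : EuclideanSpace ℝ (Fin N) → ℝ,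
      Measurable f → (∀ x, 0 ≤ f x) → Integrable f →
      (∀ᵐ x ∂(volume : Measure (EuclideanSpace ℝ (Fin N))),
        x ≠ 0 → f x ≤ K * ‖x‖ ^ (-2 / (q - m))) →
      ∫⁻ x, ENNReal.ofReal (f x ^ q) ≤
        ENNReal.ofReal
          (C * (∫ x, f x) ^ (((N : ℝ) * (m - q) + 2 * q) / ((N : ℝ) * (m - q) + 2))) := by
  have hq0 : 0 < q := ((div_nonneg (le_max_right _ _) N.cast_nonneg).trans_lt hm).trans hmq
  have hqm : q - m ≠ 0 := (sub_pos.2 hmq).ne'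
  have hB := natCast_mul_sub_add_two_mul_pos hm hmq hq
  have hβ : (finrank ℝ (EuclideanSpace ℝ (Fin N)) : ℝ) < q * (2 / (q - m)) := by
    rw [finrank_euclideanSpace_fin, mul_div_assoc', lt_div_iff₀ (sub_pos.2 hmq)]
    linarith
  have hθ : (q * (2 / (q - m)) - finrank ℝ (EuclideanSpace ℝ (Fin N))) /
      (2 / (q - m) - finrank ℝ (EuclideanSpace ℝ (Fin N))) =
        ((N : ℝ) * (m - q) + 2 * q) / ((N : ℝ) * (m - q) + 2) := by
    rw [finrank_euclideanSpace_fin]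
    field_simp
    ring
  obtain ⟨C, hC, hbound⟩ := exists_lintegral_ofReal_rpow_le_of_decay volume hq0 hq hβ hK.le
  refine ⟨C, hC, fun f _ hf0 hfi hdecay => ?_⟩
  rw [← hθ]
  exact hbound f hf0 hfi (by simpa only [neg_div] using hdecay)

/-- The bound `∫ f^q ≤ C (∫ f)^{(N(m-q)+2q)/(N(m-q)+2)}` for integrable `f` with
algebraic decay `f(x) ≤ K|x|^{-2/(q-m)}`. -/
theorem stmt16 {N : ℕ} (hN : 1 ≤ N) (m q K : ℝ)
    (hm : max ((N : ℝ) - 2) 0 / N < m) (hmq : m < q) (hq : q < 1) (hK : 0 < K) :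
    ∃ C : ℝ, 0 < C ∧ ∀ f : EuclideanSpace ℝ (Fin N) → ℝ,
      Measurable f → (∀ x, 0 ≤ f x) → Integrable f →
      (∀ᵐ x ∂(volume : Measure (EuclideanSpace ℝ (Fin N))),
        x ≠ 0 → f x ≤ K * ‖x‖ ^ (-2 / (q - m))) →
      ∫⁻ x, ENNReal.ofReal (f x ^ q) ≤
        ENNReal.ofReal
          (C * (∫ x, f x) ^ (((N : ℝ) * (m - q) + 2 * q) / ((N : ℝ) * (m - q) + 2))) :=
  stmt16_general m q K hm hmq hq hK
end
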